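/- Let n ≥ 1, let ψ be a smooth function on ℝⁿ supported in the unit ball, let N ≥ 1, and define K_ℝ(x,t) := ∫_{ℝⁿ} ψ(N⁻¹ξ) e^{2πi(x·ξ + t|ξ|²)} dξ. Let Q₀ ⊂ ℝⁿ be the cube of side length 1 centered at the origin. Then there is a constant C = C(n) (independent of N, ψ, x, t) such that for all x ∈ ℝⁿ and t ∈ ℝ, |K_ℝ(x,t)| ≤ C · sup_{α∈Q₀} |∑_{k∈ℤⁿ} ψ(N⁻¹(α+k)) e^{2πi((x+2tα)·k + t|k|²)}|. -/

import Mathlib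

open MeasureTheory Complex Set
open scoped ENNReal Real

noncomputable section

/-- Euclidean dot product on `ℝᵏ`. -/
def rdot {k : ℕ} (a b : Fin k → ℝ) : ℝ := ∑ i, a i * b i

/-- Pairing of an integer frequency with a point. -/
def zdot {k : ℕ} (m : Fin k → ℤ) (y : Fin k → ℝ) : ℝ := ∑ i, (m i : ℝ) * y i

/-- Squared Euclidean norm. -/
def rsq {k : ℕ} (a : Fin k → ℝ) : ℝ := ∑ i, a i ^ 2

/-- Squared Euclidean norm of an integer vector. -/
def zsq {k : ℕ} (m : Fin k → ℤ) : ℝ := ∑ i, ((m i : ℝ)) ^ 2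

/-- The character `e(r) = exp(2πir)`. -/
def e2 (r : ℝ) : ℂ := Complex.exp (2 * Real.pi * Complex.I * r)

/-- Fundamental domain `[0,1]^d` for the torus `𝕋ᵈ = ℝᵈ/ℤᵈ`. -/
def tcube (d : ℕ) : Set (Fin d → ℝ) := Set.univ.pi fun _ => Set.Icc (0:ℝ) 1

/-- `m`-th Fourier coefficient in the periodic variable. -/
def fcoef {n d : ℕ} (f : (Fin n → ℝ) → (Fin d → ℝ) → ℂ) (m : Fin d → ℤ) (x : Fin n → ℝ) : ℂ :=
  ∫ y in tcube d, f x y * e2 (-(zdot m y))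

/-- `f̂ₘ(ξ)`, the Fourier transform in `x` of the `m`-th Fourier coefficient. -/
def fhat {n d : ℕ} (f : (Fin n → ℝ) → (Fin d → ℝ) → ℂ) (m : Fin d → ℤ) (ξ : Fin n → ℝ) : ℂ :=
  ∫ x, fcoef f m x * e2 (-(rdot x ξ))

/-- Schrödinger evolution `e^{itΔ}f` on `ℝⁿ × 𝕋ᵈ`. -/
def sevol {n d : ℕ} (f : (Fin n → ℝ) → (Fin d → ℝ) → ℂ) (t : ℝ)
    (x : Fin n → ℝ) (y : Fin d → ℝ) : ℂ :=
  ∑' m : Fin d → ℤ, ∫ ξ, fhat f m ξ * e2 (rdot x ξ + zdot m y + t * (rsq ξ + zsq m))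

/-- Space-time `L^p` norm over `ℝⁿ × 𝕋ᵈ × I`. -/
def stLp {n d : ℕ} (p : ℝ) (F : ℝ → (Fin n → ℝ) → (Fin d → ℝ) → ℂ) (I : Set ℝ) : ℝ≥0∞ :=
  (∫⁻ t in I, ∫⁻ y in tcube d, ∫⁻ x, (‖F t x y‖₊ : ℝ≥0∞) ^ p) ^ (1 / p)

/-- `L²` norm on `ℝⁿ × 𝕋ᵈ`. -/
def l2norm {n d : ℕ} (f : (Fin n → ℝ) → (Fin d → ℝ) → ℂ) : ℝ≥0∞ :=
  (∫⁻ y in tcube d, ∫⁻ x, (‖f x y‖₊ : ℝ≥0∞) ^ (2:ℝ)) ^ (1/2 : ℝ)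

/-- Sobolev `H^s` norm on `ℝⁿ × 𝕋ᵈ`. -/
def hsnorm {n d : ℕ} (s : ℝ) (f : (Fin n → ℝ) → (Fin d → ℝ) → ℂ) : ℝ≥0∞ :=
  (∑' m : Fin d → ℤ, ∫⁻ ξ,
      ENNReal.ofReal ((1 + rsq ξ + zsq m) ^ s) * (‖fhat f m ξ‖₊ : ℝ≥0∞) ^ (2:ℝ)) ^ (1/2 : ℝ)

/-- Smooth on `ℝⁿ × 𝕋ᵈ` (i.e. smooth and `ℤᵈ`-periodic in the second variable) and rapidly
decaying in `x` together with all derivatives. -/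
def SmoothDecaying {n d : ℕ} (f : (Fin n → ℝ) → (Fin d → ℝ) → ℂ) : Prop :=
  ContDiff ℝ (⊤ : ℕ∞) (fun p : (Fin n → ℝ) × (Fin d → ℝ) => f p.1 p.2) ∧
  (∀ (x : Fin n → ℝ) (y : Fin d → ℝ) (k : Fin d → ℤ),
      f x (fun i => y i + (k i : ℝ)) = f x y) ∧
  (∀ (K i : ℕ), ∃ C : ℝ, ∀ (x : Fin n → ℝ) (y : Fin d → ℝ),
      ‖x‖ ^ K *
        ‖iteratedFDeriv ℝ i (fun p : (Fin n → ℝ) × (Fin d → ℝ) => f p.1 p.2) (x, y)‖ ≤ C)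

/-- A smooth bump function: values in `[0,1]`, `≡ 1` on the unit ball, supported in `B(0,2)`. -/
def IsBump {k : ℕ} (φ : (Fin k → ℝ) → ℝ) : Prop :=
  ContDiff ℝ (⊤ : ℕ∞) φ ∧ (∀ v, φ v ∈ Set.Icc (0:ℝ) 1) ∧
  (∀ v, rsq v ≤ 1 → φ v = 1) ∧ (∀ v, 4 ≤ rsq v → φ v = 0)

/-- `x` is a dyadic integer `2^k ≥ 1`. -/
def DyadicR (x : ℝ) : Prop := ∃ k : ℕ, x = 2 ^ k

/-- Evolution `e^{itΔ}P_{≤N}f` of the Littlewood–Paley truncation of `f`. -/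
def sevolP {n d : ℕ} (φ : (Fin (n+d) → ℝ) → ℝ) (N : ℝ)
    (f : (Fin n → ℝ) → (Fin d → ℝ) → ℂ) (t : ℝ) (x : Fin n → ℝ) (y : Fin d → ℝ) : ℂ :=
  ∑' m : Fin d → ℤ, ∫ ξ,
    (φ (N⁻¹ • (Fin.append ξ (fun i => (m i : ℝ)))) : ℂ) * fhat f m ξ *
      e2 (rdot x ξ + zdot m y + t * (rsq ξ + zsq m))

/-- Evolution `e^{itΔ}P_{≤N}P^x_{≤M}f`. -/
def sevolPx {n d : ℕ} (φ : (Fin (n+d) → ℝ) → ℝ) (φ₀ : (Fin n → ℝ) → ℝ) (N M : ℝ)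
    (f : (Fin n → ℝ) → (Fin d → ℝ) → ℂ) (t : ℝ) (x : Fin n → ℝ) (y : Fin d → ℝ) : ℂ :=
  ∑' m : Fin d → ℤ, ∫ ξ,
    (φ (N⁻¹ • (Fin.append ξ (fun i => (m i : ℝ)))) : ℂ) * (φ₀ (M⁻¹ • ξ) : ℂ) * fhat f m ξ *
      e2 (rdot x ξ + zdot m y + t * (rsq ξ + zsq m))

/-- Fourier transform on `ℝⁿ`. -/
def fhatR {n : ℕ} (g : (Fin n → ℝ) → ℂ) (ξ : Fin n → ℝ) : ℂ :=
  ∫ x, g x * e2 (-(rdot x ξ))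

/-- Smooth and rapidly decaying (together with all derivatives) on `ℝⁿ`. -/
def SmoothDecayingR {n : ℕ} (g : (Fin n → ℝ) → ℂ) : Prop :=
  ContDiff ℝ (⊤ : ℕ∞) g ∧
  ∀ (K i : ℕ), ∃ C : ℝ, ∀ x, ‖x‖ ^ K * ‖iteratedFDeriv ℝ i g x‖ ≤ C

/-- Space-time convolution on `ℝⁿ × 𝕋ᵈ × ℝ`. -/
def stConv {n d : ℕ} (K h : (Fin n → ℝ) → (Fin d → ℝ) → ℝ → ℂ)
    (x : Fin n → ℝ) (y : Fin d → ℝ) (t : ℝ) : ℂ :=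
  ∫ t' : ℝ, ∫ y' in tcube d, ∫ x', K (x - x') (y - y') (t - t') * h x' y' t'

/-- Smooth on `ℝⁿ × 𝕋ᵈ × ℝ` and rapidly decaying in `(x,t)` together with all derivatives. -/
def SmoothDecaying3 {n d : ℕ} (h : (Fin n → ℝ) → (Fin d → ℝ) → ℝ → ℂ) : Prop :=
  ContDiff ℝ (⊤ : ℕ∞) (fun p : ((Fin n → ℝ) × (Fin d → ℝ)) × ℝ => h p.1.1 p.1.2 p.2) ∧
  (∀ (x : Fin n → ℝ) (y : Fin d → ℝ) (t : ℝ) (k : Fin d → ℤ),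
      h x (fun i => y i + (k i : ℝ)) t = h x y t) ∧
  (∀ (K i : ℕ), ∃ C : ℝ, ∀ (x : Fin n → ℝ) (y : Fin d → ℝ) (t : ℝ),
      (‖x‖ + |t|) ^ K *
        ‖iteratedFDeriv ℝ i
          (fun p : ((Fin n → ℝ) × (Fin d → ℝ)) × ℝ => h p.1.1 p.1.2 p.2) ((x, y), t)‖ ≤ C)

/-- `l`-th Fourier coefficient in the periodic variable of a space-time function. -/
def hcoef3 {n d : ℕ} (h : (Fin n → ℝ) → (Fin d → ℝ) → ℝ → ℂ) (l : Fin d → ℤ)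
    (x : Fin n → ℝ) (t : ℝ) : ℂ :=
  ∫ y in tcube d, h x y t * e2 (-(zdot l y))

/-!
Tile `ℝⁿ` by the integer translates `Q₀ + k` of the half-open cube `Q₀ = [-1/2, 1/2)ⁿ` and
write `ξ = α + k` with `α ∈ Q₀`. Expanding `x·ξ + t|ξ|²` splits off a phase `x·α + t|α|²` that
does not depend on `k`, and what is left is the `k`-th term of the Weyl sum at `α`. Since
`ψ(N⁻¹ ·)` is compactly supported, only finitely many `k` contribute, so the sum and the
integral over `Q₀` commute, and the kernel is the integral over `Q₀`, a set of measure one,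
of a unimodular factor times the Weyl sum. This gives the inequality with `C = 1`.
-/

lemma e2_add (a b : ℝ) : e2 (a + b) = e2 a * e2 b := by
  rw [e2, e2, e2, ← Complex.exp_add]
  push_cast
  ring_nf

lemma norm_e2 (r : ℝ) : ‖e2 r‖ = 1 := by
  unfold e2
  rw [show 2 * π * I * r = ((2 * π * r : ℝ) : ℂ) * I by push_cast; ring,
    Complex.norm_exp_ofReal_mul_I]

@[fun_prop]
lemma continuous_e2 : Continuous e2 := by
  unfold e2; fun_prop

lemma sq_le_rsq {k : ℕ} (a : Fin k → ℝ) (i : Fin k) : a i ^ 2 ≤ rsq a :=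
  Finset.single_le_sum (f := fun j => a j ^ 2) (fun _ _ => sq_nonneg _) (Finset.mem_univ i)

section Support

variable {n : ℕ} {E : Type*} [Zero E] {ψ : (Fin n → ℝ) → E}

lemma eq_zero_of_one_lt_abs (hsupp : ∀ ξ, 1 < rsq ξ → ψ ξ = 0) {v : Fin n → ℝ} {i : Fin n}
    (hi : 1 < |v i|) : ψ v = 0 :=
  hsupp v <| by nlinarith [sq_le_rsq v i, sq_abs (v i), abs_nonneg (v i)]

lemma eq_zero_of_lt_abs_smul (hsupp : ∀ ξ, 1 < rsq ξ → ψ ξ = 0) {N : ℝ} (hN : 0 < N)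
    {v : Fin n → ℝ} {i : Fin n} (hi : N < |v i|) : ψ (N⁻¹ • v) = 0 :=
  eq_zero_of_one_lt_abs hsupp (i := i) <| by
    rwa [Pi.smul_apply, smul_eq_mul, abs_mul, abs_inv, abs_of_pos hN, one_lt_inv_mul₀ hN]

lemma hasCompactSupport_of_rsq (hsupp : ∀ ξ, 1 < rsq ξ → ψ ξ = 0) : HasCompactSupport ψ := by
  refine HasCompactSupport.intro (isCompact_closedBall (0 : Fin n → ℝ) 1) fun v hv => ?_
  rw [Metric.mem_closedBall, dist_zero_right, pi_norm_le_iff_of_nonneg zero_le_one] at hv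
  simp only [not_forall, not_le] at hv
  obtain ⟨i, hi⟩ := hv
  exact eq_zero_of_one_lt_abs hsupp (i := i) hi

end Support

/-- The paper's cube `Q₀`, taken half-open so that its integer translates tile `ℝⁿ`. -/
def centeredCube (n : ℕ) : Set (Fin n → ℝ) := univ.pi fun _ => Ico (-(1 / 2)) (1 / 2)

section Cube

variable {n : ℕ}

lemma measurableSet_centeredCube : MeasurableSet (centeredCube n) :=
  MeasurableSet.univ_pi fun _ => measurableSet_Ico

lemma volume_centeredCube : volume (centeredCube n) = 1 := by
  simp only [centeredCube, volume_pi_pi, Real.volume_Ico]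
  norm_num

lemma abs_le_of_mem_centeredCube {α : Fin n → ℝ} (hα : α ∈ centeredCube n) (i : Fin n) :
    |α i| ≤ 1 / 2 := by
  have := mem_univ_pi.1 hα i
  rw [mem_Ico] at this
  exact abs_le.2 ⟨this.1, this.2.le⟩

lemma sub_mem_centeredCube_iff {ξ : Fin n → ℝ} {k : Fin n → ℤ} :
    (ξ - fun i => (k i : ℝ)) ∈ centeredCube n ↔ k = fun i => ⌊ξ i + 1 / 2⌋ := by
  simp only [centeredCube, mem_univ_pi, Pi.sub_apply, mem_Ico, funext_iff, eq_comm (a := k _),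
    Int.floor_eq_iff]
  refine forall_congr' fun i => ?_
  constructor <;> rintro ⟨h₁, h₂⟩ <;> constructor <;> linarith

theorem integral_eq_tsum_setIntegral_centeredCube {F : Type*} [NormedAddCommGroup F]
    [NormedSpace ℝ F] {f : (Fin n → ℝ) → F} (hf : Integrable f) :
    ∫ ξ, f ξ = ∑' k : Fin n → ℤ, ∫ α in centeredCube n, f (α + fun i => (k i : ℝ)) := by
  set tile : (Fin n → ℤ) → Set (Fin n → ℝ) :=
    fun k => (fun ξ => ξ - fun i => (k i : ℝ)) ⁻¹' centeredCube n
  have tile_measurable (k) : MeasurableSet (tile k) :=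
    measurableSet_centeredCube.preimage (by fun_prop)
  have tile_disjoint : Pairwise (Function.onFun Disjoint tile) := fun k k' hkk' =>
    disjoint_left.2 fun ξ hk hk' =>
      hkk' ((sub_mem_centeredCube_iff.1 hk).trans (sub_mem_centeredCube_iff.1 hk').symm)
  have tile_cover : (⋃ k, tile k) = univ :=
    eq_univ_of_forall fun ξ => mem_iUnion.2 ⟨_, sub_mem_centeredCube_iff.2 rfl⟩
  rw [← setIntegral_univ, ← tile_cover,
    integral_iUnion tile_measurable tile_disjoint (tile_cover ▸ hf.integrableOn)]
  refine tsum_congr fun k => ?_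
  have translate := measurePreserving_add_right (volume : Measure (Fin n → ℝ)) fun i => (k i : ℝ)
  rw [← translate.setIntegral_preimage_emb
    (MeasurableEquiv.addRight _).measurableEmbedding f (tile k)]
  congr 2
  ext α
  simp [tile]

end Cube

theorem setIntegral_tsum_of_eqOn_zero {ι X F : Type*} [MeasurableSpace X] {μ : Measure X}
    [NormedAddCommGroup F] [NormedSpace ℝ F] {s : Set X} (hs : MeasurableSet s)
    {g : ι → X → F} (T : Finset ι) (hg : ∀ k ∈ T, IntegrableOn (g k) s μ)
    (hT : ∀ k ∉ T, EqOn (g k) 0 s) :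
    ∫ x in s, ∑' k, g k x ∂μ = ∑' k, ∫ x in s, g k x ∂μ := by
  rw [tsum_eq_sum fun k hk => setIntegral_eq_zero_of_forall_eq_zero fun x hx => hT k hk hx,
    ← integral_finsetSum T hg]
  exact setIntegral_congr_fun hs fun x hx => tsum_eq_sum fun k hk => hT k hk hx

section Weyl

variable {n : ℕ}

def weylSummand (ψ : (Fin n → ℝ) → ℂ) (N t : ℝ) (x : Fin n → ℝ) (k : Fin n → ℤ)
    (α : Fin n → ℝ) : ℂ :=
  ψ (N⁻¹ • (fun i => α i + (k i : ℝ))) *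
    e2 (rdot (fun i => x i + 2 * t * α i) (fun i => (k i : ℝ)) + t * zsq k)

def weylSum (ψ : (Fin n → ℝ) → ℂ) (N t : ℝ) (x α : Fin n → ℝ) : ℂ :=
  ∑' k, weylSummand ψ N t x k α

lemma rdot_add_mul_rsq_add_intCast (x α : Fin n → ℝ) (t : ℝ) (k : Fin n → ℤ) :
    rdot x (α + fun i => (k i : ℝ)) + t * rsq (α + fun i => (k i : ℝ)) =
      (rdot x α + t * rsq α) +
        (rdot (fun i => x i + 2 * t * α i) (fun i => (k i : ℝ)) + t * zsq k) := by
  simp only [rdot, rsq, zsq, Pi.add_apply, Finset.mul_sum, ← Finset.sum_add_distrib]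
  exact Finset.sum_congr rfl fun i _ => by ring

lemma kernel_integrand_add_intCast (ψ : (Fin n → ℝ) → ℂ) (N t : ℝ) (x α : Fin n → ℝ)
    (k : Fin n → ℤ) :
    ψ (N⁻¹ • (α + fun i => (k i : ℝ))) *
        e2 (rdot x (α + fun i => (k i : ℝ)) + t * rsq (α + fun i => (k i : ℝ))) =
      e2 (rdot x α + t * rsq α) * weylSummand ψ N t x k α := by
  show ψ (N⁻¹ • fun i => α i + (k i : ℝ)) * _ = _
  rw [rdot_add_mul_rsq_add_intCast, e2_add, weylSummand]
  ring

lemma exists_lt_abs_add_of_notMem_box {N : ℝ} {k : Fin n → ℤ}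
    (hk : k ∉ Fintype.piFinset fun _ => Finset.Icc (-⌈N⌉) ⌈N⌉) {α : Fin n → ℝ}
    (hα : ∀ i, |α i| ≤ 1 / 2) : ∃ i, N < |α i + k i| := by
  simp only [Fintype.mem_piFinset, Finset.mem_Icc, not_forall, ← abs_le, not_le] at hk
  obtain ⟨i, hi⟩ := hk
  have hk_large : ((⌈N⌉ + 1 : ℤ) : ℝ) ≤ |(k i : ℝ)| := by
    rw [← Int.cast_abs]; exact_mod_cast hi
  push_cast at hk_large
  have hreverse : |(k i : ℝ)| - |α i| ≤ |α i + k i| :=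
    (abs_sub_abs_le_abs_add _ _).trans_eq (by rw [add_comm])
  exact ⟨i, by linarith [hα i, Int.le_ceil N]⟩

variable {ψ : (Fin n → ℝ) → ℂ} {N : ℝ}

lemma weylSummand_eq_zero (hsupp : ∀ ξ, 1 < rsq ξ → ψ ξ = 0) (hN : 0 < N) (t : ℝ)
    (x : Fin n → ℝ) {k : Fin n → ℤ}
    (hk : k ∉ Fintype.piFinset fun _ => Finset.Icc (-⌈N⌉) ⌈N⌉) {α : Fin n → ℝ}
    (hα : ∀ i, |α i| ≤ 1 / 2) : weylSummand ψ N t x k α = 0 := by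
  obtain ⟨i, hi⟩ := exists_lt_abs_add_of_notMem_box hk hα
  rw [weylSummand, eq_zero_of_lt_abs_smul hsupp hN (v := fun i => α i + k i) hi, zero_mul]

lemma bddAbove_norm_weylSum (hψ : Continuous ψ) (hsupp : ∀ ξ, 1 < rsq ξ → ψ ξ = 0)
    (hN : 0 < N) (t : ℝ) (x : Fin n → ℝ) :
    BddAbove (range fun α : {α : Fin n → ℝ // ∀ i, |α i| ≤ 1 / 2} =>
      ‖weylSum ψ N t x α.1‖) := by
  set T := Fintype.piFinset fun _ : Fin n => Finset.Icc (-⌈N⌉) ⌈N⌉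
  obtain ⟨M, hM⟩ := (hasCompactSupport_of_rsq hsupp).exists_bound_of_continuous hψ
  refine ⟨T.card * M, ?_⟩
  rintro _ ⟨⟨α, hα⟩, rfl⟩
  calc ‖weylSum ψ N t x α‖ = ‖∑ k ∈ T, weylSummand ψ N t x k α‖ := by
        rw [weylSum, tsum_eq_sum fun k hk => weylSummand_eq_zero hsupp hN t x hk hα]
    _ ≤ ∑ k ∈ T, ‖weylSummand ψ N t x k α‖ := norm_sum_le _ _
    _ ≤ ∑ _k ∈ T, M := Finset.sum_le_sum fun k _ => by
        rw [weylSummand, norm_mul, norm_e2, mul_one]; exact hM _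
    _ = T.card * M := by rw [Finset.sum_const, nsmul_eq_mul]

lemma kernel_eq_setIntegral_weylSum (hψ : Continuous ψ) (hsupp : ∀ ξ, 1 < rsq ξ → ψ ξ = 0)
    (hN : 0 < N) (x : Fin n → ℝ) (t : ℝ) :
    ∫ ξ, ψ (N⁻¹ • ξ) * e2 (rdot x ξ + t * rsq ξ) =
      ∫ α in centeredCube n, e2 (rdot x α + t * rsq α) * weylSum ψ N t x α := by
  have hint : Integrable fun ξ => ψ (N⁻¹ • ξ) * e2 (rdot x ξ + t * rsq ξ) := by
    refine Continuous.integrable_of_hasCompactSupport ?_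
      ((hasCompactSupport_of_rsq hsupp).comp_smul (inv_ne_zero hN.ne')).mul_right
    unfold rdot rsq
    fun_prop
  rw [integral_eq_tsum_setIntegral_centeredCube hint,
    ← setIntegral_tsum_of_eqOn_zero measurableSet_centeredCube
      (Fintype.piFinset fun _ => Finset.Icc (-⌈N⌉) ⌈N⌉)
      (fun k _ => (hint.comp_add_right _).integrableOn) fun k hk α hα => by
        rw [kernel_integrand_add_intCast, Pi.zero_apply,
          weylSummand_eq_zero hsupp hN t x hk (abs_le_of_mem_centeredCube hα), mul_zero]]
  refine setIntegral_congr_fun measurableSet_centeredCube fun α _ => ?_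
  simp only [kernel_integrand_add_intCast, tsum_mul_left, weylSum]

theorem norm_kernel_le_iSup_norm_weylSum (hψ : Continuous ψ)
    (hsupp : ∀ ξ, 1 < rsq ξ → ψ ξ = 0) (hN : 0 < N) (x : Fin n → ℝ) (t : ℝ) :
    ‖∫ ξ, ψ (N⁻¹ • ξ) * e2 (rdot x ξ + t * rsq ξ)‖ ≤
      ⨆ α : {α : Fin n → ℝ // ∀ i, |α i| ≤ 1 / 2}, ‖weylSum ψ N t x α.1‖ := by
  rw [kernel_eq_setIntegral_weylSum hψ hsupp hN]
  calc _ ≤ (⨆ α : {α : Fin n → ℝ // ∀ i, |α i| ≤ 1 / 2}, ‖weylSum ψ N t x α.1‖) *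
        volume.real (centeredCube n) := by
        refine norm_setIntegral_le_of_norm_le_const (by simp [volume_centeredCube])
          fun α hα => ?_
        rw [norm_mul, norm_e2, one_mul]
        exact le_ciSup (bddAbove_norm_weylSum hψ hsupp hN t x)
          ⟨α, abs_le_of_mem_centeredCube hα⟩
    _ = _ := by simp [measureReal_def, volume_centeredCube]

end Weyl

theorem statement10_general (n : ℕ) :
    ∃ C : ℝ, 0 < C ∧ ∀ ψ : (Fin n → ℝ) → ℂ, ContDiff ℝ (⊤ : ℕ∞) ψ →
      (∀ ξ, 1 < rsq ξ → ψ ξ = 0) → ∀ N : ℝ, 1 ≤ N → ∀ (x : Fin n → ℝ) (t : ℝ),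
        ‖∫ ξ, ψ (N⁻¹ • ξ) * e2 (rdot x ξ + t * rsq ξ)‖
          ≤ C * ⨆ α : {α : Fin n → ℝ // ∀ i, |α i| ≤ 1 / 2},
              ‖∑' k : Fin n → ℤ,
                  ψ (N⁻¹ • (fun i => α.1 i + (k i : ℝ))) *
                    e2 (rdot (fun i => x i + 2 * t * α.1 i) (fun i => (k i : ℝ)) +
                      t * zsq k)‖ := by
  refine ⟨1, one_pos, fun ψ hψ hsupp N hN x t => ?_⟩
  rw [one_mul]
  exact norm_kernel_le_iSup_norm_weylSum hψ.continuous hsupp (by linarith) x t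

/-- Lemma 4.2, discretization of the Euclidean kernel: the free kernel
`K_ℝ(x,t)` is dominated by the supremum over `α` in the unit cube `Q₀` of the corresponding
discrete Weyl sums. -/
theorem statement10 (n : ℕ) (hn : 1 ≤ n) :
    ∃ C : ℝ, 0 < C ∧ ∀ ψ : (Fin n → ℝ) → ℂ, ContDiff ℝ (⊤ : ℕ∞) ψ →
      (∀ ξ, 1 < rsq ξ → ψ ξ = 0) → ∀ N : ℝ, 1 ≤ N → ∀ (x : Fin n → ℝ) (t : ℝ),
        ‖∫ ξ, ψ (N⁻¹ • ξ) * e2 (rdot x ξ + t * rsq ξ)‖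
          ≤ C * ⨆ α : {α : Fin n → ℝ // ∀ i, |α i| ≤ 1 / 2},
              ‖∑' k : Fin n → ℤ,
                  ψ (N⁻¹ • (fun i => α.1 i + (k i : ℝ))) *
                    e2 (rdot (fun i => x i + 2 * t * α.1 i) (fun i => (k i : ℝ)) +
                      t * zsq k)‖ :=
  statement10_general n
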